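/- Let Λ₁, Λ₂ be self-dual ℤ_p-lattices in a quadratic space V over ℚ_p that are p-neighbours, i.e. [Λ₁ : Λ₁ ∩ Λ₂] = [Λ₂ : Λ₁ ∩ Λ₂] = p. Then there exists a primitive isotropic vector w ∈ Λ₁ (w ∉ pΛ₁, q(w) = 0) such that Λ₂ = (1/p)ℤ_p w + {u ∈ Λ₁ : ⟨u, w⟩ ≡ 0 mod p}. -/

import Mathlib

/-!
Pick `y ∈ Λ₂ \ Λ₁`. Self-duality of `Λ₁` gives `z ∈ Λ₁` with `⟨y, z⟩ ∉ ℤ_p`, while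
`p • y ∈ Λ₁` because the index is `p`; so `p ⟨y, z⟩` is a unit. As `p` is odd, `q(y)` and `q(z)`
are integral, and Hensel's lemma solves
`p q(y + t z) = p q(y) + p ⟨y, z⟩ t + p q(z) t² = 0` with `t ∈ p ℤ_p`. Then `y + t z` is an
isotropic vector of `Λ₂ \ Λ₁`, and `w = p (y + t z)` works: since the index is prime,
`Λ₂ = ℤ_p (y + t z) + Λ₁ ∩ Λ₂`, and self-duality of both lattices identifies `Λ₁ ∩ Λ₂` with
`{u ∈ Λ₁ : ⟨u, y + t z⟩ ∈ ℤ_p}`.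
-/

open QuadraticMap

namespace PadicInt

variable {p : ℕ} [Fact p.Prime]

theorem mem_range_algebraMap_iff {x : ℚ_[p]} :
    x ∈ Set.range (algebraMap ℤ_[p] ℚ_[p]) ↔ ‖x‖ ≤ 1 :=
  ⟨fun ⟨y, hy⟩ => hy ▸ y.norm_le_one, fun h => ⟨⟨x, h⟩, rfl⟩⟩

open Polynomial in
theorem exists_root_quadratic {a b : ℤ_[p]} (c : ℤ_[p]) (ha : ‖a‖ < 1) (hb : ‖b‖ = 1) :
    ∃ t : ℤ_[p], ‖t‖ < 1 ∧ a + b * t + c * t ^ 2 = 0 := by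
  have hF₀ : (C a + C b * X + C c * X ^ 2).eval 0 = a := by simp
  have hF₀' : (C a + C b * X + C c * X ^ 2).derivative.eval 0 = b := by
    simp [derivative_pow]
  obtain ⟨t, hFt, ht, -⟩ := hensels_lemma (p := p) (F := C a + C b * X + C c * X ^ 2) (a := 0)
    (by simpa [coe_aeval_eq_eval, hF₀, hF₀', hb] using ha)
  simp only [coe_aeval_eq_eval, hF₀', hb, sub_zero] at hFt ht
  exact ⟨t, ht, by simpa using hFt⟩

end PadicInt

namespace Padic

variable {p : ℕ} [Fact p.Prime]

theorem norm_two (hp : p ≠ 2) : ‖(2 : ℚ_[p])‖ = 1 := by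
  rw [← Nat.cast_ofNat, norm_natCast_eq_one_iff]
  exact (Nat.coprime_primes Fact.out Nat.prime_two).mpr hp

theorem norm_natCast_mul_eq_one_of_one_lt {x : ℚ_[p]} (hpx : ‖(p : ℚ_[p]) * x‖ ≤ 1)
    (hx : 1 < ‖x‖) : ‖(p : ℚ_[p]) * x‖ = 1 := by
  refine (hpx.lt_or_eq).resolve_left fun hlt => hx.not_ge ?_
  obtain ⟨y, hy⟩ := (PadicInt.norm_lt_one_iff_dvd ⟨_, hpx⟩).mp hlt
  have : x = y := by
    apply mul_left_cancel₀ (Nat.cast_ne_zero.mpr (Fact.out : p.Prime).ne_zero)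
    simpa using congrArg ((↑) : ℤ_[p] → ℚ_[p]) hy
  exact this ▸ y.norm_le_one

end Padic

namespace Submodule

variable {R M : Type*} [Ring R] [AddCommGroup M] [Module R M] {N : Submodule R M}

theorem natCast_smul_mem_of_card_quotient_eq {n : ℕ} (h : Nat.card (M ⧸ N) = n) (x : M) :
    (n : R) • x ∈ N := by
  rw [← Quotient.mk_eq_zero, Quotient.mk_smul, Nat.cast_smul_eq_nsmul, ← h]
  exact card_nsmul_eq_zero'

theorem exists_sub_zsmul_mem_of_card_quotient_eq_prime {p : ℕ} [Fact p.Prime]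
    (h : Nat.card (M ⧸ N) = p) {y : M} (hy : y ∉ N) (x : M) : ∃ n : ℤ, x - n • y ∈ N := by
  obtain ⟨n, hn⟩ := AddSubgroup.mem_zmultiples_iff.mp <|
    mem_zmultiples_of_prime_card h (g := N.mkQ y) (g' := N.mkQ x) (by simpa using hy)
  exact ⟨n, by simpa [← Quotient.mk_eq_zero, sub_eq_zero] using hn.symm⟩

theorem exists_notMem_of_card_quotient_ne_one (h : Nat.card (M ⧸ N) ≠ 1) : ∃ x, x ∉ N := by
  by_contra! hN
  have : Subsingleton (M ⧸ N) := Quotient.subsingleton_iff.mpr (eq_top_iff.mpr fun x _ => hN x)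
  exact h Nat.card_unique

end Submodule

section SelfDual

variable {p : ℕ} [Fact p.Prime] {V : Type*} [AddCommGroup V] [Module ℚ_[p] V]
  (Q : QuadraticForm ℚ_[p] V)

theorem QuadraticForm.norm_le_one_of_norm_polar_self_le_one (hp : p ≠ 2) {v : V}
    (hv : ‖polar Q v v‖ ≤ 1) : ‖Q v‖ ≤ 1 := by
  rwa [polar_self, nsmul_eq_mul, norm_mul, Nat.cast_ofNat, Padic.norm_two hp, one_mul] at hv

variable [Module ℤ_[p] V]

def IsSelfDual (Λ : Submodule ℤ_[p] V) : Prop :=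
  (Λ : Set V) = {w : V | ∀ l ∈ Λ,
    QuadraticMap.polar (⇑Q) w l ∈ Set.range (algebraMap ℤ_[p] ℚ_[p])}

namespace IsSelfDual

variable {Q} {Λ Λ₁ Λ₂ : Submodule ℤ_[p] V}

theorem mem_iff (h : IsSelfDual Q Λ) {v : V} : v ∈ Λ ↔ ∀ l ∈ Λ, ‖polar Q v l‖ ≤ 1 := by
  rw [← SetLike.mem_coe, h]
  exact forall₂_congr fun _ _ => PadicInt.mem_range_algebraMap_iff

theorem coe_eq_of_forall_exists_sub_zsmul_mem (h₁ : IsSelfDual Q Λ₁) (h₂ : IsSelfDual Q Λ₂)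
    {y : V} (hy : y ∈ Λ₂) (hdecomp : ∀ v ∈ Λ₂, ∃ n : ℤ, v - n • y ∈ Λ₁) :
    (Λ₂ : Set V) = {x | ∃ (c : ℤ_[p]) (u : V), u ∈ Λ₁ ∧ ‖polar Q u y‖ ≤ 1 ∧ x = c • y + u} := by
  ext x
  constructor
  · intro hx
    obtain ⟨n, hn⟩ := hdecomp x hx
    refine ⟨n, x - n • y, hn, h₂.mem_iff.mp (Λ₂.sub_mem hx (zsmul_mem hy n)) y hy, ?_⟩
    rw [Int.cast_smul_eq_zsmul, add_sub_cancel]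
  · rintro ⟨c, u, hu, huy, rfl⟩
    refine Λ₂.add_mem (Λ₂.smul_mem c hy) (h₂.mem_iff.mpr fun l hl => ?_)
    obtain ⟨n, hn⟩ := hdecomp l hl
    have hsplit : polar Q u l = polar Q u (l - n • y) + n * polar Q u y := by
      rw [polar_sub_right, polar_smul_right_of_tower, zsmul_eq_mul]
      ring
    rw [hsplit]
    exact add_mem (h₁.mem_iff.mp hu _ hn) (mul_mem (intCast_mem (PadicInt.subring p) n) huy)

end IsSelfDual

variable [IsScalarTower ℤ_[p] ℚ_[p] V]

theorem QuadraticForm.exists_isotropic_add_smul {y z : V} (hy : ‖Q y‖ ≤ 1) (hz : ‖Q z‖ ≤ 1)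
    (hyz : ‖(p : ℚ_[p]) * polar Q y z‖ = 1) : ∃ t : ℤ_[p], ‖t‖ < 1 ∧ Q (y + t • z) = 0 := by
  obtain ⟨A, hA⟩ : ∃ A : ℤ_[p], (A : ℚ_[p]) = Q y := ⟨⟨_, hy⟩, rfl⟩
  obtain ⟨B, hB⟩ : ∃ B : ℤ_[p], (B : ℚ_[p]) = p * polar Q y z := ⟨⟨_, hyz.le⟩, rfl⟩
  obtain ⟨C, hC⟩ : ∃ C : ℤ_[p], (C : ℚ_[p]) = Q z := ⟨⟨_, hz⟩, rfl⟩
  have hpA : ‖(p : ℤ_[p]) * A‖ < 1 := by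
    rw [norm_mul, PadicInt.norm_p]
    exact (mul_le_of_le_one_right (by positivity) A.norm_le_one).trans_lt
      (inv_lt_one_of_one_lt₀ (mod_cast (Fact.out : p.Prime).one_lt))
  obtain ⟨t, ht, hroot⟩ :=
    PadicInt.exists_root_quadratic ((p : ℤ_[p]) * C) hpA (by rwa [PadicInt.norm_def, hB])
  refine ⟨t, ht, mul_left_cancel₀ (Nat.cast_ne_zero.mpr (Fact.out : p.Prime).ne_zero) ?_⟩
  have := congrArg ((↑) : ℤ_[p] → ℚ_[p]) hroot
  push_cast [hA, hB, hC] at this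
  rw [QuadraticMap.map_add Q, map_smul_of_tower, polar_smul_right_of_tower]
  simp only [Algebra.smul_def, PadicInt.algebraMap_apply, PadicInt.coe_mul]
  linear_combination this

namespace IsSelfDual

variable {Q} {Λ₁ Λ₂ : Submodule ℤ_[p] V}

theorem exists_isotropic_mem_sdiff (hp : p ≠ 2) (h₁ : IsSelfDual Q Λ₁) (h₂ : IsSelfDual Q Λ₂)
    (h₁₂ : ∀ v ∈ Λ₁, (p : ℤ_[p]) • v ∈ Λ₂) (h₂₁ : ∀ v ∈ Λ₂, (p : ℤ_[p]) • v ∈ Λ₁)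
    {y : V} (hy₂ : y ∈ Λ₂) (hy₁ : y ∉ Λ₁) : ∃ x ∈ Λ₂, x ∉ Λ₁ ∧ Q x = 0 := by
  obtain ⟨z, hz, hyz⟩ : ∃ z ∈ Λ₁, 1 < ‖polar Q y z‖ := by
    by_contra! hcon
    exact hy₁ (h₁.mem_iff.mpr hcon)
  have hpyz : ‖(p : ℚ_[p]) * polar Q y z‖ = 1 := by
    refine Padic.norm_natCast_mul_eq_one_of_one_lt ?_ hyz
    have := h₁.mem_iff.mp (h₂₁ y hy₂) z hz
    rwa [polar_smul_left_of_tower, Algebra.smul_def, PadicInt.algebraMap_apply,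
      PadicInt.coe_natCast] at this
  obtain ⟨t, ht, hQ⟩ := QuadraticForm.exists_isotropic_add_smul Q
    (QuadraticForm.norm_le_one_of_norm_polar_self_le_one Q hp (h₂.mem_iff.mp hy₂ y hy₂))
    (QuadraticForm.norm_le_one_of_norm_polar_self_le_one Q hp (h₁.mem_iff.mp hz z hz)) hpyz
  obtain ⟨s, rfl⟩ := (PadicInt.norm_lt_one_iff_dvd t).mp ht
  have htz : ((p : ℤ_[p]) * s) • z ∈ Λ₁ ⊓ Λ₂ := by
    rw [mul_comm, mul_smul]
    exact ⟨Λ₁.smul_mem _ (Λ₁.smul_mem _ hz), Λ₂.smul_mem _ (h₁₂ z hz)⟩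
  exact ⟨_, Λ₂.add_mem hy₂ htz.2, fun h => hy₁ (by simpa using Λ₁.sub_mem h htz.1), hQ⟩

end IsSelfDual

theorem QuadraticForm.exists_polar_natCast_smul_eq_natCast_mul_iff {u y : V} :
    (∃ r : ℤ_[p], polar Q u ((p : ℤ_[p]) • y) = algebraMap ℤ_[p] ℚ_[p] ((p : ℤ_[p]) * r)) ↔
      ‖polar Q u y‖ ≤ 1 := by
  have hp : (p : ℚ_[p]) ≠ 0 := Nat.cast_ne_zero.mpr (Fact.out : p.Prime).ne_zero
  simp only [polar_smul_right_of_tower, Algebra.smul_def, map_mul, map_natCast,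
    mul_right_inj' hp, ← PadicInt.mem_range_algebraMap_iff, Set.mem_range, eq_comm]

theorem algebraMap_div_natCast_smul_natCast_smul (c : ℤ_[p]) (y : V) :
    (algebraMap ℤ_[p] ℚ_[p] c / p) • ((p : ℤ_[p]) • y) = c • y := by
  have hp : (p : ℚ_[p]) ≠ 0 := Nat.cast_ne_zero.mpr (Fact.out : p.Prime).ne_zero
  rw [← IsScalarTower.algebraMap_smul ℚ_[p] (p : ℤ_[p]), smul_smul, map_natCast,
    div_mul_cancel₀ _ hp, IsScalarTower.algebraMap_smul]

end SelfDual

theorem stmt_11_general {p : ℕ} [Fact p.Prime] (hodd : p ≠ 2)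
    {V : Type*} [AddCommGroup V] [Module ℚ_[p] V]
    [Module ℤ_[p] V] [IsScalarTower ℤ_[p] ℚ_[p] V]
    (Q : QuadraticForm ℚ_[p] V)
    (Λ₁ Λ₂ : Submodule ℤ_[p] V)
    (h1self : (Λ₁ : Set V) = {w : V | ∀ l ∈ Λ₁,
      QuadraticMap.polar (⇑Q) w l ∈ Set.range (algebraMap ℤ_[p] ℚ_[p])})
    (h2self : (Λ₂ : Set V) = {w : V | ∀ l ∈ Λ₂,
      QuadraticMap.polar (⇑Q) w l ∈ Set.range (algebraMap ℤ_[p] ℚ_[p])})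
    (hidx1 : Nat.card (↥Λ₁ ⧸ Submodule.comap Λ₁.subtype (Λ₁ ⊓ Λ₂)) = p)
    (hidx2 : Nat.card (↥Λ₂ ⧸ Submodule.comap Λ₂.subtype (Λ₁ ⊓ Λ₂)) = p) :
    ∃ w ∈ Λ₁, Q w = 0 ∧ (¬ ∃ u ∈ Λ₁, w = (p : ℤ_[p]) • u) ∧
      (Λ₂ : Set V) = {x : V | ∃ (c : ℤ_[p]) (u : V), u ∈ Λ₁ ∧
        (∃ r : ℤ_[p], QuadraticMap.polar (⇑Q) u w = algebraMap ℤ_[p] ℚ_[p] ((p : ℤ_[p]) * r)) ∧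
        x = (algebraMap ℤ_[p] ℚ_[p] c / (p : ℚ_[p])) • w + u} := by
  have hp : p.Prime := Fact.out
  have h₁₂ : ∀ v ∈ Λ₁, (p : ℤ_[p]) • v ∈ Λ₂ := fun v hv =>
    (Submodule.natCast_smul_mem_of_card_quotient_eq hidx1 ⟨v, hv⟩).2
  have h₂₁ : ∀ v ∈ Λ₂, (p : ℤ_[p]) • v ∈ Λ₁ := fun v hv =>
    (Submodule.natCast_smul_mem_of_card_quotient_eq hidx2 ⟨v, hv⟩).1
  obtain ⟨⟨y₀, hy₀₂⟩, hy₀₁⟩ :=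
    Submodule.exists_notMem_of_card_quotient_ne_one (hidx2.trans_ne hp.one_lt.ne')
  obtain ⟨y, hy₂, hy₁, hQy⟩ := IsSelfDual.exists_isotropic_mem_sdiff hodd h1self h2self h₁₂ h₂₁
    hy₀₂ fun h => hy₀₁ ⟨h, hy₀₂⟩
  have hdecomp : ∀ v ∈ Λ₂, ∃ n : ℤ, v - n • y ∈ Λ₁ := fun v hv =>
    (Submodule.exists_sub_zsmul_mem_of_card_quotient_eq_prime hidx2 (y := ⟨y, hy₂⟩)
      (fun h => hy₁ h.1) ⟨v, hv⟩).imp fun _ h => h.1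
  refine ⟨(p : ℤ_[p]) • y, h₂₁ y hy₂, by rw [map_smul_of_tower, hQy, smul_zero], ?_, ?_⟩
  · rintro ⟨u, hu, hpu⟩
    rw [← IsScalarTower.algebraMap_smul ℚ_[p] (p : ℤ_[p]) y,
      ← IsScalarTower.algebraMap_smul ℚ_[p] (p : ℤ_[p]) u] at hpu
    exact hy₁ (smul_right_injective V (by simp [hp.ne_zero]) hpu ▸ hu)
  · rw [IsSelfDual.coe_eq_of_forall_exists_sub_zsmul_mem h1self h2self hy₂ hdecomp]
    simp only [QuadraticForm.exists_polar_natCast_smul_eq_natCast_mul_iff,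
      algebraMap_div_natCast_smul_natCast_smul]

/-- If Λ₁, Λ₂ are self-dual ℤ_p-lattices that are p-neighbours, then
there is a primitive isotropic vector w ∈ Λ₁ with
Λ₂ = (1/p)ℤ_p w + {u ∈ Λ₁ : ⟨u, w⟩ ≡ 0 mod p}. -/
theorem stmt_11 {p : ℕ} [Fact p.Prime] (hodd : p ≠ 2)
    {V : Type*} [AddCommGroup V] [Module ℚ_[p] V] [FiniteDimensional ℚ_[p] V]
    [Module ℤ_[p] V] [IsScalarTower ℤ_[p] ℚ_[p] V]
    (Q : QuadraticForm ℚ_[p] V)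
    (hnd : ∀ w : V, (∀ x : V, QuadraticMap.polar (⇑Q) w x = 0) → w = 0)
    (Λ₁ Λ₂ : Submodule ℤ_[p] V) (h1fg : Λ₁.FG) (h2fg : Λ₂.FG)
    (h1full : Submodule.span ℚ_[p] (Λ₁ : Set V) = ⊤)
    (h2full : Submodule.span ℚ_[p] (Λ₂ : Set V) = ⊤)
    (h1self : (Λ₁ : Set V) = {w : V | ∀ l ∈ Λ₁,
      QuadraticMap.polar (⇑Q) w l ∈ Set.range (algebraMap ℤ_[p] ℚ_[p])})
    (h2self : (Λ₂ : Set V) = {w : V | ∀ l ∈ Λ₂,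
      QuadraticMap.polar (⇑Q) w l ∈ Set.range (algebraMap ℤ_[p] ℚ_[p])})
    (hidx1 : Nat.card (↥Λ₁ ⧸ Submodule.comap Λ₁.subtype (Λ₁ ⊓ Λ₂)) = p)
    (hidx2 : Nat.card (↥Λ₂ ⧸ Submodule.comap Λ₂.subtype (Λ₁ ⊓ Λ₂)) = p) :
    ∃ w ∈ Λ₁, Q w = 0 ∧ (¬ ∃ u ∈ Λ₁, w = (p : ℤ_[p]) • u) ∧
      (Λ₂ : Set V) = {x : V | ∃ (c : ℤ_[p]) (u : V), u ∈ Λ₁ ∧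
        (∃ r : ℤ_[p], QuadraticMap.polar (⇑Q) u w = algebraMap ℤ_[p] ℚ_[p] ((p : ℤ_[p]) * r)) ∧
        x = (algebraMap ℤ_[p] ℚ_[p] c / (p : ℚ_[p])) • w + u} :=
  stmt_11_general hodd Q Λ₁ Λ₂ h1self h2self hidx1 hidx2
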